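/- For all real z and ζ, one has |F(z + ζ) − F(z) − φ(z)·ζ| ≤ ζ²/(2(c₁ − c₀)). -/

import Mathlib

/-!
On `(-∞, c₀]` the function `F` is a primitive of `φ`, and `φ(c₀) = 0`; since beyond `c₀` the
function `F` is constant and `φ` vanishes, `F' = φ` on all of `ℝ`. Moreover `|φ'(z)| = (c₁ - c₀) / (c₁ - z)² ≤ 1 / (c₁ - c₀)`
for `z < c₀`, so `φ` is `(c₁ - c₀)⁻¹`-Lipschitz, and the bound is the second-order Taylor
estimate for a function with Lipschitz derivative.
-/

noncomputable def phi (c₀ c₁ : ℝ) (z : ℝ) : ℝ :=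
  if z ≤ c₀ then (c₀ - z) / (c₁ - z) else 0

noncomputable def F (c₀ c₁ : ℝ) (s : ℝ) : ℝ :=
  if s ≤ c₀ then s + (c₁ - c₀) * Real.log ((c₁ - s) / c₁)
  else c₀ + (c₁ - c₀) * Real.log ((c₁ - c₀) / c₁)

open Set NNReal

section Taylor

variable {E : Type*} [NormedAddCommGroup E] [NormedSpace ℝ E] {f f' : ℝ → E} {L : ℝ≥0}

theorem norm_sub_sub_smul_le_of_lipschitzWith_deriv_of_nonneg
    (hf : ∀ x, HasDerivAt f (f' x) x) (hL : LipschitzWith L f') (x : ℝ) {h : ℝ} (hh : 0 ≤ h) :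
    ‖f (x + h) - f x - h • f' x‖ ≤ L * h ^ 2 / 2 := by
  have hremainder : ∀ t, HasDerivAt (fun t => f (x + t) - f x - t • f' x) (f' (x + t) - f' x) t :=
    fun t => (((hf (x + t)).comp_const_add x t).sub_const (f x)).sub
      (by simpa using (hasDerivAt_id t).smul_const (f' x))
  have hbound : ∀ t : ℝ, HasDerivAt (fun t : ℝ => L * t ^ 2 / 2) (L * t) t := fun t =>
    (((hasDerivAt_pow 2 t).const_mul (L : ℝ)).div_const 2).congr_deriv (by push_cast; ring)
  refine image_norm_le_of_norm_deriv_right_le_deriv_boundary (a := 0) (b := h)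
    (fun t _ => (hremainder t).continuousAt.continuousWithinAt)
    (fun t _ => (hremainder t).hasDerivWithinAt) (by simp) hbound ?_ ⟨hh, le_rfl⟩
  intro t ht
  simpa [← dist_eq_norm, abs_of_nonneg ht.1] using hL.dist_le_mul (x + t) x

theorem norm_sub_sub_smul_le_of_lipschitzWith_deriv
    (hf : ∀ x, HasDerivAt f (f' x) x) (hL : LipschitzWith L f') (x h : ℝ) :
    ‖f (x + h) - f x - h • f' x‖ ≤ L * h ^ 2 / 2 := by
  rcases le_total 0 h with hh | hh
  · exact norm_sub_sub_smul_le_of_lipschitzWith_deriv_of_nonneg hf hL x hh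
  · have hf_neg : ∀ x, HasDerivAt (fun x => f (-x)) (-f' (-x)) x := fun x => by
      simpa [Function.comp_def] using (hf (-x)).scomp x (hasDerivAt_neg x)
    have hL_neg : LipschitzWith L fun x => -f' (-x) :=
      LipschitzWith.of_dist_le_mul fun a b => by
        simpa [dist_neg_neg] using hL.dist_le_mul (-a) (-b)
    simpa [neg_add_eq_sub, ← sub_eq_add_neg, add_comm] using
      norm_sub_sub_smul_le_of_lipschitzWith_deriv_of_nonneg hf_neg hL_neg (-x) (neg_nonneg.2 hh)

end Taylor

section Truncation

variable {E : Type*} [NormedAddCommGroup E] [NormedSpace ℝ E] {g g' : ℝ → E} {a : ℝ}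

theorem hasDerivAt_comp_min_of_deriv_eq_zero (hg : ∀ x ≤ a, HasDerivAt g (g' x) x)
    (ha : g' a = 0) (x : ℝ) : HasDerivAt (fun x => g (min x a)) (g' (min x a)) x := by
  rcases lt_trichotomy x a with hx | rfl | hx
  · rw [min_eq_left hx.le]
    exact (hg x hx.le).congr_of_eventuallyEq <|
      (eventually_lt_nhds hx).mono fun y hy => by simp [min_eq_left hy.le]
  · have hleft : HasDerivWithinAt (fun y => g (min y x)) (g' x) (Iic x) x :=
      (hg x le_rfl).hasDerivWithinAt.congr (fun y (hy : y ≤ x) => by simp [min_eq_left hy])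
        (by simp)
    have hright : HasDerivWithinAt (fun y => g (min y x)) (g' x) (Ici x) x := by
      rw [ha]
      exact (hasDerivWithinAt_const x _ (g x)).congr
        (fun y (hy : x ≤ y) => by simp [min_eq_right hy]) (by simp)
    simpa [Iic_union_Ici] using hleft.union hright
  · rw [min_eq_right hx.le, ha]
    exact (hasDerivAt_const x (g a)).congr_of_eventuallyEq <|
      (eventually_gt_nhds hx).mono fun y hy => by simp [min_eq_right hy.le]

end Truncation

theorem LipschitzOnWith.comp_min_const {α : Type*} [PseudoEMetricSpace α] {g : ℝ → α} {a : ℝ}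
    {K : ℝ≥0} (hg : LipschitzOnWith K g (Iic a)) : LipschitzWith K fun x => g (min x a) := by
  simpa [Function.comp_def] using
    hg.comp (LipschitzWith.id.min_const a).lipschitzOnWith (s := univ) fun x _ => min_le_right x a

section

variable {c₀ c₁ : ℝ}

theorem F_eq_comp_min :
    F c₀ c₁ = fun s => min s c₀ + (c₁ - c₀) * Real.log ((c₁ - min s c₀) / c₁) := by
  funext s
  unfold F
  split_ifs with hs
  · simp [min_eq_left hs]
  · simp [min_eq_right (le_of_not_ge hs)]

theorem phi_eq_comp_min : phi c₀ c₁ = fun z => (c₀ - min z c₀) / (c₁ - min z c₀) := by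
  funext z
  unfold phi
  split_ifs with hz
  · simp [min_eq_left hz]
  · simp [min_eq_right (le_of_not_ge hz)]

theorem hasDerivAt_add_mul_log (hc₁ : c₁ ≠ 0) {t : ℝ} (ht : t < c₁) :
    HasDerivAt (fun t => t + (c₁ - c₀) * Real.log ((c₁ - t) / c₁)) ((c₀ - t) / (c₁ - t)) t := by
  have hne : c₁ - t ≠ 0 := (sub_pos.2 ht).ne'
  have hlog := (((hasDerivAt_id' t).const_sub c₁).div_const c₁).log (div_ne_zero hne hc₁)
  exact ((hasDerivAt_id' t).add (hlog.const_mul (c₁ - c₀))).congr_deriv (by field_simp; ring)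

theorem hasDerivAt_F (hc₀ : 0 < c₀) (hc : c₀ < c₁) (s : ℝ) :
    HasDerivAt (F c₀ c₁) (phi c₀ c₁ s) s := by
  rw [F_eq_comp_min, phi_eq_comp_min]
  exact hasDerivAt_comp_min_of_deriv_eq_zero
    (fun t ht => hasDerivAt_add_mul_log (hc₀.trans hc).ne' (ht.trans_lt hc)) (by simp) s

theorem lipschitzOnWith_sub_div_sub (hc : c₀ < c₁) :
    LipschitzOnWith (c₁ - c₀)⁻¹.toNNReal (fun z => (c₀ - z) / (c₁ - z)) (Iic c₀) := by
  have hd : 0 < c₁ - c₀ := sub_pos.2 hc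
  refine LipschitzOnWith.of_dist_le_mul fun x (hx : x ≤ c₀) y (hy : y ≤ c₀) => ?_
  have hx' : c₁ - c₀ ≤ c₁ - x := by linarith
  have hy' : c₁ - c₀ ≤ c₁ - y := by linarith
  have hx0 : 0 < c₁ - x := hd.trans_le hx'
  have hy0 : 0 < c₁ - y := hd.trans_le hy'
  have hdiff : (c₀ - x) / (c₁ - x) - (c₀ - y) / (c₁ - y)
      = (c₁ - c₀) * (y - x) / ((c₁ - x) * (c₁ - y)) := by
    field_simp
    ring
  rw [Real.dist_eq, Real.dist_eq, hdiff, abs_div, abs_mul, abs_of_pos hd,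
    abs_of_pos (mul_pos hx0 hy0), abs_sub_comm y x, Real.coe_toNNReal _ (inv_nonneg.2 hd.le)]
  calc (c₁ - c₀) * |x - y| / ((c₁ - x) * (c₁ - y))
      ≤ (c₁ - c₀) * |x - y| / ((c₁ - c₀) * (c₁ - c₀)) := by gcongr
    _ = (c₁ - c₀)⁻¹ * |x - y| := by field_simp

theorem lipschitzWith_phi (hc : c₀ < c₁) : LipschitzWith (c₁ - c₀)⁻¹.toNNReal (phi c₀ c₁) := by
  rw [phi_eq_comp_min]
  exact (lipschitzOnWith_sub_div_sub hc).comp_min_const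

end

theorem F_taylor_bound (c₀ c₁ : ℝ) (hc₀ : 0 < c₀) (hc : c₀ < c₁) :
    ∀ z ζ : ℝ, |F c₀ c₁ (z + ζ) - F c₀ c₁ z - phi c₀ c₁ z * ζ| ≤ ζ ^ 2 / (2 * (c₁ - c₀)) := by
  intro z ζ
  have hd : 0 < c₁ - c₀ := sub_pos.2 hc
  have h := norm_sub_sub_smul_le_of_lipschitzWith_deriv (hasDerivAt_F hc₀ hc)
    (lipschitzWith_phi hc) z ζ
  rw [Real.norm_eq_abs, smul_eq_mul, mul_comm ζ, Real.coe_toNNReal _ (inv_nonneg.2 hd.le)] at h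
  calc _ ≤ _ := h
    _ = _ := by field_simp
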